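/- Let p = (p_j)_{j=1}^M with p_j = 1/(j·C(M)) where C(M) = Σ_{j=1}^M 1/j, and let q = (q_j) be defined by q_j = 1/(⌈j/N⌉·N·C(M)) for 1 ≤ j ≤ N⌊M/N⌋ (and arbitrarily nonnegative beyond, summing appropriately). Then Σ_{j=1}^{N⌊M/N⌋} √(p_j q_j) ≥ (Σ_{i=1}^{⌊M/N⌋} 1/i)/(Σ_{i=1}^M 1/i). -/

import Mathlib

open Finset

lemma ceil_block {N i j : ℕ} (hN : 1 ≤ N) (h1 : N * i < j) (h2 : j ≤ N * (i+1)) :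
    ⌈(j : ℝ) / N⌉₊ = i + 1 := by
  have hNpos : (0:ℝ) < N := by exact_mod_cast hN
  rw [Nat.ceil_eq_iff (by omega)]
  constructor
  · push_cast
    rw [lt_div_iff₀ hNpos]
    have : (N:ℝ) * i < j := by exact_mod_cast h1
    linarith
  · rw [div_le_iff₀ hNpos]
    push_cast
    have : (j:ℝ) ≤ N * (i+1) := by exact_mod_cast h2
    linarith

lemma block_sum (N : ℕ) (hN : 1 ≤ N) (K : ℕ) :
    ∑ j ∈ Icc 1 (N*K), (1:ℝ)/((⌈(j:ℝ)/N⌉₊ : ℝ) * N) = ∑ i ∈ Icc 1 K, (1:ℝ)/i := by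
  induction K with
  | zero => simp
  | succ K ih =>
    have h1 : Finset.Icc 1 (N*K) = Finset.Ioc 0 (N*K) := by
      rw [← Finset.Icc_add_one_left_eq_Ioc]; rfl
    have h2 : Finset.Icc 1 (N*(K+1)) = Finset.Ioc 0 (N*(K+1)) := by
      rw [← Finset.Icc_add_one_left_eq_Ioc]; rfl
    rw [h2, ← Finset.sum_Ioc_consecutive _ (Nat.zero_le (N*K))
      (by nlinarith : N*K ≤ N*(K+1)), ← h1, ih]
    have hblock : ∑ j ∈ Finset.Ioc (N*K) (N*(K+1)), (1:ℝ)/((⌈(j:ℝ)/N⌉₊ : ℝ) * N)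
        = 1/(K+1) := by
      have : ∀ j ∈ Finset.Ioc (N*K) (N*(K+1)),
          (1:ℝ)/((⌈(j:ℝ)/N⌉₊ : ℝ) * N) = 1/(((K:ℝ)+1) * N) := by
        intro j hj
        rw [Finset.mem_Ioc] at hj
        rw [ceil_block hN hj.1 hj.2]
        push_cast
        ring_nf
      rw [Finset.sum_congr rfl this, Finset.sum_const, Nat.card_Ioc]
      have hcard : N*(K+1) - N*K = N := by
        rw [Nat.mul_succ]; omega
      rw [hcard]
      have hNpos : (0:ℝ) < N := by exact_mod_cast hN
      field_simp
      rw [nsmul_eq_mul, ← mul_div_assoc, mul_one, ← mul_div_assoc]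
      exact div_self (by positivity)
    rw [hblock]
    rw [Finset.sum_Icc_succ_top (Nat.le_add_left 1 K)]
    push_cast
    ring

/-- Key coefficient-overlap estimate in the embezzling protocol:
with `p_j = 1/(j C(M))` and `q_j = 1/(⌈j/N⌉ N C(M))` where `C(M) = ∑_{j=1}^M 1/j`,
the Bhattacharyya overlap `∑_{j=1}^{N⌊M/N⌋} √(p_j q_j)` is at least
`(∑_{i=1}^{⌊M/N⌋} 1/i)/(∑_{i=1}^M 1/i)`. -/
theorem embezzling_overlap_bound (M N : ℕ) (hN : 1 ≤ N) (hMN : N ≤ M) :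
    (∑ j ∈ Icc 1 (N * (M / N)),
        Real.sqrt ((1 / ((j : ℝ) * (∑ i ∈ Icc 1 M, (1 : ℝ) / i))) *
          (1 / ((⌈(j : ℝ) / N⌉₊ : ℝ) * N * (∑ i ∈ Icc 1 M, (1 : ℝ) / i)))))
      ≥ (∑ i ∈ Icc 1 (M / N), (1 : ℝ) / i) / (∑ i ∈ Icc 1 M, (1 : ℝ) / i) := by
  set C : ℝ := ∑ i ∈ Icc 1 M, (1 : ℝ) / i with hCdef
  have hM1 : 1 ≤ M := le_trans hN hMN
  have hC : 0 < C := by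
    apply Finset.sum_pos
    · intro i hi
      rw [Finset.mem_Icc] at hi
      have : (0:ℝ) < i := by exact_mod_cast hi.1
      positivity
    · exact ⟨1, Finset.mem_Icc.mpr ⟨le_refl 1, hM1⟩⟩
  have hNpos : (0:ℝ) < N := by exact_mod_cast hN
  have key : ∀ j ∈ Icc 1 (N * (M / N)),
      (1 : ℝ) / ((⌈(j : ℝ) / N⌉₊ : ℝ) * N * C) ≤
      Real.sqrt ((1 / ((j : ℝ) * C)) * (1 / ((⌈(j : ℝ) / N⌉₊ : ℝ) * N * C))) := by
    intro j hj
    rw [Finset.mem_Icc] at hj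
    have hj1 : (1:ℝ) ≤ j := by exact_mod_cast hj.1
    have hc1 : 1 ≤ ⌈(j : ℝ) / N⌉₊ := by
      rw [Nat.one_le_ceil_iff]
      positivity
    have hcR : (0:ℝ) < (⌈(j : ℝ) / N⌉₊ : ℝ) := by exact_mod_cast hc1
    set c : ℝ := (⌈(j : ℝ) / N⌉₊ : ℝ)
    have hjc : (j : ℝ) ≤ c * N := by
      have := Nat.le_ceil ((j : ℝ) / N)
      rw [div_le_iff₀ hNpos] at this
      exact this
    have hb : (0:ℝ) < 1 / (c * N * C) := by positivity
    have hab : (1:ℝ) / (c * N * C) ≤ 1 / ((j : ℝ) * C) := by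
      apply one_div_le_one_div_of_le
      · positivity
      · nlinarith
    calc (1:ℝ) / (c * N * C)
        = Real.sqrt ((1 / (c * N * C)) * (1 / (c * N * C))) := by
          rw [Real.sqrt_mul_self hb.le]
      _ ≤ Real.sqrt ((1 / ((j : ℝ) * C)) * (1 / (c * N * C))) := by
          apply Real.sqrt_le_sqrt
          exact mul_le_mul_of_nonneg_right hab hb.le
  refine ge_iff_le.mpr ?_
  calc (∑ i ∈ Icc 1 (M / N), (1 : ℝ) / i) / C
      = (∑ j ∈ Icc 1 (N * (M / N)), (1:ℝ)/((⌈(j:ℝ)/N⌉₊ : ℝ) * N)) / C := by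
        rw [block_sum N hN (M / N)]
    _ = ∑ j ∈ Icc 1 (N * (M / N)), (1:ℝ)/((⌈(j:ℝ)/N⌉₊ : ℝ) * N * C) := by
        rw [Finset.sum_div]
        apply Finset.sum_congr rfl
        intro j hj
        rw [div_div]
    _ ≤ _ := Finset.sum_le_sum key
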